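/- Let 0 < a < 1 and σ₁ ≥ 2λ_u > 0. With λ̃ = (1/2)(σ₁ - sqrt((σ₁ - 2λ_u)² + 4a)), one has λ_u(σ₁ - (λ_u + 1/λ_u)) = λ̃(σ₁ - λ̃ - (1-a)/λ̃), provided λ̃ > 0. -/
import Mathlib


theorem stmt_2 (a σ₁ lu : ℝ) (ha : 0 < a) (ha1 : a < 1) (hlu : 0 < lu) (hσ : 2 * lu ≤ σ₁)
    (lt : ℝ) (hlt : lt = (σ₁ - Real.sqrt ((σ₁ - 2 * lu) ^ 2 + 4 * a)) / 2)
    (hltpos : 0 < lt) :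
    lu * (σ₁ - (lu + 1 / lu)) = lt * (σ₁ - lt - (1 - a) / lt) := by
  have hs : Real.sqrt ((σ₁ - 2 * lu) ^ 2 + 4 * a) ^ 2 = (σ₁ - 2 * lu) ^ 2 + 4 * a :=
    Real.sq_sqrt (by positivity)
  have hq : lt ^ 2 - σ₁ * lt = lu ^ 2 - σ₁ * lu + a := by
    have : (σ₁ - 2 * lt) ^ 2 = (σ₁ - 2 * lu) ^ 2 + 4 * a := by
      rw [hlt]; ring_nf; ring_nf at hs; linarith
    nlinarith [this]
  field_simp
  nlinarith [hq, mul_pos hlu hltpos]
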